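/- Let σ be a simplex of a finite simplicial complex X of dimension d and 0 ≤ λ < 1/(d+1). Then the map φ^λ_σ restricted to |σ| ∩ cl ⟨σ⟩_λ is surjective onto |σ|: for every y ∈ |σ| there exists x ∈ |σ| ∩ cl ⟨σ⟩_λ with φ^λ_σ(x) = y; explicitly, x with barycentric coordinates t_v(x) = t_v(y)(1 − λ·n_σ) + λ for v ∈ σ and t_v(x) = 0 otherwise works. -/

import Mathlib

/-- The truncated rescaling `φ_λ(t) = max(0, (t-λ)/(1-λ))`. -/
noncomputable def phiL (lam t : ℝ) : ℝ := max 0 ((t - lam) / (1 - lam))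

/-- The normalized push map `φ^λ_σ` (its formula does not depend on `σ`). -/
noncomputable def phiMap {V : Type*} [Fintype V] (lam : ℝ) (x : V → ℝ) : V → ℝ :=
  fun v => phiL lam (x v) / ∑ w, phiL lam (x w)

/-- The closed geometric simplex spanned by a set `s` of vertices. -/
def gsS {V : Type*} [Fintype V] (s : Set V) : Set (V → ℝ) :=
  {x | (∀ v, 0 ≤ x v) ∧ (∀ v, v ∉ s → x v = 0) ∧ ∑ v, x v = 1}

/-- The geometric realization of a simplicial complex `K`. -/
def geomReal {V : Type*} [Fintype V] (K : Set (Finset V)) : Set (V → ℝ) :=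
  ⋃ σ ∈ K, gsS (↑σ : Set V)

/-- The closure of the `λ`-cell of a simplex `σ` inside `|X|`. -/
def clLamCell {V : Type*} [Fintype V] (K : Set (Finset V)) (lam : ℝ)
    (σ : Finset V) : Set (V → ℝ) :=
  {x | x ∈ geomReal K ∧ (∀ v ∈ σ, lam ≤ x v) ∧ ∀ v ∉ σ, x v ≤ lam}

/-!
Take `x := y (1 - λ n) + λ` on `σ` and `0` off `σ`. Then `x` lies in `|σ|` and has every coordinate
on `σ` at least `λ` and every other coordinate `0 ≤ λ`, so it lies in `cl ⟨σ⟩_λ`. Moreover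
`φ_λ(t_v(x)) = t_v(y) (1 - λ n) / (1 - λ)` for every vertex `v`, a fixed positive multiple of
`t_v(y)`, so normalizing returns `y`. Positivity of `1 - λ n` is where `n ≤ d + 1` and
`λ < 1 / (d + 1)` enter.
-/

lemma phiL_of_le {lam t : ℝ} (hlam : lam < 1) (ht : t ≤ lam) : phiL lam t = 0 :=
  max_eq_left (div_nonpos_of_nonpos_of_nonneg (by linarith) (by linarith))

lemma phiL_of_ge {lam t : ℝ} (hlam : lam < 1) (ht : lam ≤ t) :
    phiL lam t = (t - lam) / (1 - lam) :=
  max_eq_right (div_nonneg (by linarith) (by linarith))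

lemma phiMap_eq_of_phiL_eq_mul {V : Type*} [Fintype V] {lam c : ℝ} {x y : V → ℝ}
    (hc : c ≠ 0) (hy : ∑ v, y v = 1) (hxy : ∀ v, phiL lam (x v) = c * y v) :
    phiMap lam x = y := by
  have hsum : ∑ w, phiL lam (x w) = c := by simp only [hxy, ← Finset.mul_sum, hy, mul_one]
  funext v
  rw [phiMap, hsum, hxy, mul_div_cancel_left₀ _ hc]

section phiPreimage

variable {V : Type*} [Fintype V] {lam : ℝ} {σ : Finset V} {y : V → ℝ}

lemma sum_eq_one_of_mem_gsS (hy : y ∈ gsS (↑σ : Set V)) : ∑ v ∈ σ, y v = 1 := by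
  rw [← hy.2.2]
  exact Finset.sum_subset (Finset.subset_univ σ) fun v _ hv => hy.2.1 v (by simpa using hv)

variable [DecidableEq V]

def phiPreimage (lam : ℝ) (σ : Finset V) (y : V → ℝ) : V → ℝ :=
  fun v => if v ∈ σ then y v * (1 - lam * σ.card) + lam else 0

lemma le_phiPreimage (h0 : 0 ≤ 1 - lam * σ.card) (hy : y ∈ gsS (↑σ : Set V)) {v : V}
    (hv : v ∈ σ) : lam ≤ phiPreimage lam σ y v := by
  rw [phiPreimage, if_pos hv]
  nlinarith [hy.1 v]

lemma phiPreimage_mem_gsS (hlam : 0 ≤ lam) (h0 : 0 ≤ 1 - lam * σ.card)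
    (hy : y ∈ gsS (↑σ : Set V)) : phiPreimage lam σ y ∈ gsS (↑σ : Set V) := by
  refine ⟨fun v => ?_, fun v hv => if_neg hv, ?_⟩
  · by_cases hv : v ∈ σ
    · exact hlam.trans (le_phiPreimage h0 hy hv)
    · exact (if_neg hv).ge
  · simp only [phiPreimage]
    rw [Finset.sum_ite_mem, Finset.univ_inter, Finset.sum_add_distrib, ← Finset.sum_mul,
      sum_eq_one_of_mem_gsS hy, Finset.sum_const, nsmul_eq_mul]
    ring

lemma phiPreimage_mem_clLamCell {K : Set (Finset V)} (hσ : σ ∈ K) (hlam : 0 ≤ lam)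
    (h0 : 0 ≤ 1 - lam * σ.card) (hy : y ∈ gsS (↑σ : Set V)) :
    phiPreimage lam σ y ∈ clLamCell K lam σ :=
  ⟨Set.mem_biUnion hσ (phiPreimage_mem_gsS hlam h0 hy), fun _ hv => le_phiPreimage h0 hy hv,
    fun _ hv => (if_neg hv).trans_le hlam⟩

lemma phiL_phiPreimage (hlam : 0 ≤ lam) (hlam1 : lam < 1) (h0 : 0 ≤ 1 - lam * σ.card)
    (hy : y ∈ gsS (↑σ : Set V)) (v : V) :
    phiL lam (phiPreimage lam σ y v) = (1 - lam * σ.card) / (1 - lam) * y v := by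
  by_cases hv : v ∈ σ
  · rw [phiL_of_ge hlam1 (le_phiPreimage h0 hy hv), phiPreimage, if_pos hv]
    ring
  · rw [phiPreimage, if_neg hv, phiL_of_le hlam1 hlam, hy.2.1 v hv, mul_zero]

lemma phiMap_phiPreimage (hlam : 0 ≤ lam) (hlam1 : lam < 1) (hpos : 0 < 1 - lam * σ.card)
    (hy : y ∈ gsS (↑σ : Set V)) : phiMap lam (phiPreimage lam σ y) = y :=
  phiMap_eq_of_phiL_eq_mul (div_pos hpos (by linarith)).ne' hy.2.2
    (phiL_phiPreimage hlam hlam1 hpos.le hy)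

end phiPreimage

theorem phiMap_surjective_general {V : Type*} [Fintype V] [DecidableEq V]
    (K : Set (Finset V)) (d : ℕ)
    (hdim : ∀ σ ∈ K, σ.card ≤ d + 1)
    (lam : ℝ) (h0 : 0 ≤ lam) (h1 : lam < 1 / (d + 1))
    (σ : Finset V) (hσ : σ ∈ K) :
    ∀ y ∈ gsS (↑σ : Set V),
      (fun v => if v ∈ σ then y v * (1 - lam * σ.card) + lam else 0) ∈
          gsS (↑σ : Set V) ∩ clLamCell K lam σ ∧
      phiMap lam (fun v => if v ∈ σ then y v * (1 - lam * σ.card) + lam else 0)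
          = y := by
  intro y hy
  have hd : (0 : ℝ) < d + 1 := by positivity
  have hlam_d : lam * (d + 1) < 1 := (lt_div_iff₀ hd).mp h1
  have hcard : (σ.card : ℝ) ≤ d + 1 := by exact_mod_cast hdim σ hσ
  have hpos : 0 < 1 - lam * σ.card := by nlinarith
  have hlam1 : lam < 1 := by nlinarith
  exact ⟨⟨phiPreimage_mem_gsS h0 hpos.le hy, phiPreimage_mem_clLamCell hσ h0 hpos.le hy⟩,
    phiMap_phiPreimage h0 hlam1 hpos hy⟩

/-- `φ^λ_σ` restricted to `|σ| ∩ cl ⟨σ⟩_λ` is onto `|σ|`; the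
explicit preimage of `y` has coordinates `t_v(y)(1 − λ n_σ) + λ` on `σ`. -/
theorem phiMap_surjective {V : Type*} [Fintype V] [DecidableEq V]
    (K : Set (Finset V)) (d : ℕ)
    (hne : ∀ σ ∈ K, σ.Nonempty)
    (hK : ∀ σ ∈ K, ∀ τ : Finset V, τ ⊆ σ → τ.Nonempty → τ ∈ K)
    (hdim : ∀ σ ∈ K, σ.card ≤ d + 1)
    (lam : ℝ) (h0 : 0 ≤ lam) (h1 : lam < 1 / (d + 1))
    (σ : Finset V) (hσ : σ ∈ K) :
    ∀ y ∈ gsS (↑σ : Set V),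
      (fun v => if v ∈ σ then y v * (1 - lam * σ.card) + lam else 0) ∈
          gsS (↑σ : Set V) ∩ clLamCell K lam σ ∧
      phiMap lam (fun v => if v ∈ σ then y v * (1 - lam * σ.card) + lam else 0)
          = y :=
  phiMap_surjective_general K d hdim lam h0 h1 σ hσ
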